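/- Let V₀ > 0, λ > 0 and V(x) = V₀e^{−λx}. Let θ, σ, φ, ψ be differentiable real-valued functions on a real interval satisfying the Einstein–Klein–Gordon evolution system with θ(t) > 0 throughout, and define S = σ/θ, U = √(V(φ))/θ, P = ψ/θ. Then at every time t: θ' = θ²·(−1/3 − 2S² + U² − P²), S' = θ·F_S(S,U,P), U' = θ·F_U(S,U,P), and P' = θ·F_P(S,U,P), where (F_S, F_U, F_P) is the reduced vector field F. -/

import Mathlib

/-!
Dividing by the expansion rate `θ > 0` turns every equation into one for the scaled
variables: for `g = f / θ` one has `g' = θ · (f'/θ² − g · θ'/θ²)`, and each of `θ'/θ²`,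
`σ'/θ²`, `ψ'/θ²` is a polynomial in `S, U, P` once `V(φ)/θ²` is written as `U²`. For the
exponential potential `V' = −λV`, so `(√V(φ))' = −(λ/2)√V(φ)·ψ`, which gives the `U` equation.
-/

/-- `S`-component of the reduced vector field `F`. -/
noncomputable def FS (lam S U P : ℝ) : ℝ :=
  -1 / (3 * Real.sqrt 3) - (2 / 3) * S + S ^ 2 / Real.sqrt 3
    + U ^ 2 / Real.sqrt 3 + P ^ 2 / (2 * Real.sqrt 3)
    + 2 * S ^ 3 - S * U ^ 2 + S * P ^ 2

/-- `U`-component of the reduced vector field `F`. -/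
noncomputable def FU (lam S U P : ℝ) : ℝ :=
  U * (1 / 3 - (lam / 2) * P + 2 * S ^ 2 - U ^ 2 + P ^ 2)

/-- `P`-component of the reduced vector field `F`. -/
noncomputable def FP (lam S U P : ℝ) : ℝ :=
  -(2 / 3) * P + lam * U ^ 2 + 2 * S ^ 2 * P - U ^ 2 * P + P ^ 3

theorem HasDerivAt.div_rescaled {f θ g : ℝ → ℝ} {f' θ' t : ℝ} (hf : HasDerivAt f f' t)
    (hθ : HasDerivAt θ θ' t) (hθt : θ t ≠ 0) (hg : ∀ s, g s = f s / θ s) :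
    HasDerivAt g (θ t * (f' / θ t ^ 2 - g t * (θ' / θ t ^ 2))) t := by
  obtain rfl : g = fun s => f s / θ s := funext hg
  exact (hf.div hθ hθt).congr_deriv (by field_simp)

theorem hasDerivAt_exp_potential {V : ℝ → ℝ} {V₀ lam : ℝ}
    (hV : ∀ x, V x = V₀ * Real.exp (-lam * x)) (x : ℝ) :
    HasDerivAt V (-lam * V x) x := by
  obtain rfl : V = fun x => V₀ * Real.exp (-lam * x) := funext hV
  exact (((hasDerivAt_id x).const_mul (-lam)).exp.const_mul V₀).congr_deriv (by simp; ring)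

theorem HasDerivAt.sqrt_comp_of_hasDerivAt_neg_mul {V φ : ℝ → ℝ} {lam ψ t : ℝ}
    (hV : HasDerivAt V (-lam * V (φ t)) (φ t)) (hφ : HasDerivAt φ ψ t)
    (hpos : 0 < V (φ t)) :
    HasDerivAt (fun s => √(V (φ s))) (-(lam / 2) * √(V (φ t)) * ψ) t := by
  refine ((hV.comp t hφ).sqrt hpos.ne').congr_deriv ?_
  rw [Function.comp_apply]
  field_simp
  rw [Real.sq_sqrt hpos.le]
  ring

theorem reduced_system
    (V₀ lam : ℝ) (hV₀ : 0 < V₀)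
    (V : ℝ → ℝ) (hVdef : ∀ x, V x = V₀ * Real.exp (-lam * x))
    (θ σ φ ψ : ℝ → ℝ)
    (hθd : Differentiable ℝ θ) (hσd : Differentiable ℝ σ)
    (hφd : Differentiable ℝ φ) (hψd : Differentiable ℝ ψ)
    (eθ : ∀ t, deriv θ t = -(1 / 3) * θ t ^ 2 - 2 * σ t ^ 2 + V (φ t) - ψ t ^ 2)
    (eσ : ∀ t, deriv σ t = -θ t ^ 2 / (3 * Real.sqrt 3) - θ t * σ t
        + σ t ^ 2 / Real.sqrt 3 + (1 / Real.sqrt 3) * (V (φ t) + ψ t ^ 2 / 2))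
    (eφ : ∀ t, deriv φ t = ψ t)
    (eψ : ∀ t, deriv ψ t = -θ t * ψ t - deriv V (φ t))
    (hθpos : ∀ t, 0 < θ t)
    (S U P : ℝ → ℝ)
    (hS : ∀ t, S t = σ t / θ t)
    (hU : ∀ t, U t = Real.sqrt (V (φ t)) / θ t)
    (hP : ∀ t, P t = ψ t / θ t) :
    ∀ t,
      HasDerivAt θ (θ t ^ 2 * (-(1 / 3) - 2 * S t ^ 2 + U t ^ 2 - P t ^ 2)) t ∧
      HasDerivAt S (θ t * FS lam (S t) (U t) (P t)) t ∧
      HasDerivAt U (θ t * FU lam (S t) (U t) (P t)) t ∧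
      HasDerivAt P (θ t * FP lam (S t) (U t) (P t)) t := by
  intro t
  have hθt : θ t ≠ 0 := (hθpos t).ne'
  have hVpos : 0 < V (φ t) := by rw [hVdef]; positivity
  have hU2 : V (φ t) / θ t ^ 2 = U t ^ 2 := by rw [hU, div_pow, Real.sq_sqrt hVpos.le]
  have hθs : deriv θ t / θ t ^ 2 = -(1 / 3) - 2 * S t ^ 2 + U t ^ 2 - P t ^ 2 := by
    rw [eθ, hS, hP, ← hU2]; field_simp
  have hσs : deriv σ t / θ t ^ 2 = -1 / (3 * √3) - S t + S t ^ 2 / √3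
      + (U t ^ 2 + P t ^ 2 / 2) / √3 := by
    rw [eσ, hS, hP, ← hU2]; field_simp
  have hψs : deriv ψ t / θ t ^ 2 = -P t + lam * U t ^ 2 := by
    rw [eψ, (hasDerivAt_exp_potential hVdef _).deriv, hP, ← hU2]; field_simp; ring
  have hθ' := (hθd t).hasDerivAt
  have hsqrt := (hasDerivAt_exp_potential hVdef (φ t)).sqrt_comp_of_hasDerivAt_neg_mul
    (eφ t ▸ (hφd t).hasDerivAt) hVpos
  refine ⟨hθ'.congr_deriv ?_, ((hσd t).hasDerivAt.div_rescaled hθ' hθt hS).congr_deriv ?_,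
    (hsqrt.div_rescaled hθ' hθt hU).congr_deriv ?_,
    ((hψd t).hasDerivAt.div_rescaled hθ' hθt hP).congr_deriv ?_⟩
  · rw [← hθs]; field_simp
  · rw [hσs, hθs, FS]; ring
  · rw [hθs, FU, hU t, hP t]; field_simp; ring
  · rw [hψs, hθs, FP]; ring
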